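/- In a quantum-Wajsberg algebra, with x ⊔ y := (x → y) → y, one has x ⊔ (x → y)* = x for all x, y. -/
import Mathlib


class InvBEAlgebra (X : Type*) extends One X, Zero X where
  imp : X → X → X
  imp_self : ∀ x : X, imp x x = 1
  imp_one : ∀ x : X, imp x 1 = 1
  one_imp : ∀ x : X, imp 1 x = x
  exchange : ∀ x y z : X, imp x (imp y z) = imp y (imp x z)
  zero_imp : ∀ x : X, imp 0 x = 1
  involutive : ∀ x : X, imp (imp x 0) 0 = x

namespace InvBEAlgebra

variable {X : Type*} [InvBEAlgebra X]

def star (x : X) : X := imp x 0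

def inf (x y : X) : X := star (imp (imp (star x) (star y)) (star y))

def sup (x y : X) : X := imp (imp x y) y

def odot (x y : X) : X := star (imp x (star y))

def leQ (x y : X) : Prop := x = inf x y

end InvBEAlgebra

class QWAlgebra (X : Type*) extends InvBEAlgebra X where
  qw : ∀ x y z : X, imp x (InvBEAlgebra.inf (InvBEAlgebra.inf x y) (InvBEAlgebra.inf z x)) =
        InvBEAlgebra.inf (imp x y) (imp x z)

open InvBEAlgebra

section
variable {X : Type*} [InvBEAlgebra X]
open InvBEAlgebra

lemma my_star_star (x : X) : star (star x) = x := InvBEAlgebra.involutive x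

lemma my_star_zero : star (0 : X) = 1 := InvBEAlgebra.zero_imp 0

lemma my_star_one : star (1 : X) = 0 := InvBEAlgebra.one_imp 0

lemma my_inf_zero (x : X) : inf x 0 = 0 := by
  unfold inf
  rw [my_star_zero, InvBEAlgebra.imp_one, my_star_one]

lemma my_zero_inf (x : X) : inf 0 x = 0 := by
  unfold inf
  rw [my_star_zero, InvBEAlgebra.one_imp, InvBEAlgebra.imp_self, my_star_one]

end

lemma my_key {X : Type*} [QWAlgebra X] (x z : X) :
    inf (InvBEAlgebra.star x) (imp x z) = InvBEAlgebra.star x := by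
  have h := QWAlgebra.qw x 0 z
  rw [my_inf_zero, my_zero_inf] at h
  exact h.symm

theorem stmt8 {X : Type*} [QWAlgebra X] (x y : X) :
    sup x (star (imp x y)) = x := by
  have h := my_key x y
  have h2 : InvBEAlgebra.star (inf (InvBEAlgebra.star x) (imp x y)) =
      InvBEAlgebra.star (InvBEAlgebra.star x) := congrArg InvBEAlgebra.star h
  rw [my_star_star] at h2
  unfold inf at h2
  rw [my_star_star, my_star_star] at h2
  exact h2
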